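/- Stabilization of the Pareto tables: for every vertex v : V and every ℓ ≥ (card V) − 1, the Pareto table satisfies D ℓ v = D ((card V) − 1) v. -/

import Mathlib

open scoped NNReal

/-- A walk from `s` to `t`: a nonempty list of vertices starting at `s`,
ending at `t`, with `E u v` for every pair of consecutive vertices. -/
def IsWalk {V : Type*} (E : V → V → Prop) (s t : V) (l : List V) : Prop :=
  l ≠ [] ∧ l.head? = some s ∧ l.getLast? = some t ∧ l.Chain' E

/-- The multi-cost of a walk: componentwise sum of edge weights over
consecutive pairs of vertices (a walk with no edges has cost `0`). -/
def walkCost {V : Type*} {k : ℕ} (w : V → V → Fin k → ℝ≥0) (l : List V) :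
    Fin k → ℝ≥0 :=
  ((l.zip l.tail).map fun p => w p.1 p.2).sum

/-- The Pareto front: minimal elements of `S` w.r.t. the product order. -/
def paretoFront {k : ℕ} (S : Set (Fin k → ℝ≥0)) : Set (Fin k → ℝ≥0) :=
  {m | m ∈ S ∧ ¬ ∃ c ∈ S, c < m}

/-! `D ℓ v` is the Pareto front of the costs of the walks from `s` to `v` with at most `ℓ` edges:
the Pareto front of a finite set only depends on its upper closure, and relaxation respects
upper closures. Since weights are nonnegative, cutting a cycle out of a walk does not increase
its cost, so every walk is dominated by a walk without repeated vertices, which has at most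
`card V - 1` edges. Hence the upper closure of these walk costs, and with it `D ℓ v`, no longer
changes once `ℓ ≥ card V - 1`. -/

section ParetoFront

variable {k : ℕ} {S T : Set (Fin k → ℝ≥0)}

lemma paretoFront_subset (S : Set (Fin k → ℝ≥0)) : paretoFront S ⊆ S :=
  fun _ hm => hm.1

lemma mem_paretoFront_iff_minimal {m : Fin k → ℝ≥0} :
    m ∈ paretoFront S ↔ Minimal (· ∈ S) m := by
  simp only [paretoFront, Set.mem_ofPred_eq, minimal_iff_forall_lt, not_exists, not_and,
    imp_not_comm]

lemma mem_paretoFront_iff_minimal_upperClosure {m : Fin k → ℝ≥0} :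
    m ∈ paretoFront S ↔ Minimal (· ∈ upperClosure S) m := by
  simp only [mem_paretoFront_iff_minimal, minimal_iff_forall_lt]
  constructor
  · rintro ⟨hm, hmin⟩
    exact ⟨subset_upperClosure hm, fun y hym ⟨a, ha, hay⟩ => hmin (hay.trans_lt hym) ha⟩
  · rintro ⟨⟨a, ha, ham⟩, hmin⟩
    obtain rfl := ham.eq_of_not_lt fun h => hmin h (subset_upperClosure ha)
    exact ⟨ha, fun y hy hyS => hmin hy (subset_upperClosure hyS)⟩

lemma paretoFront_eq_of_upperClosure_eq (h : upperClosure S = upperClosure T) :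
    paretoFront S = paretoFront T := by
  ext m
  simp only [mem_paretoFront_iff_minimal_upperClosure, h]

lemma Set.Subsingleton.paretoFront_eq (hS : S.Subsingleton) : paretoFront S = S :=
  Set.Subset.antisymm (paretoFront_subset S) fun _ hm =>
    ⟨hm, fun ⟨_, hc, hcm⟩ => hcm.ne (hS hc hm)⟩

lemma Set.Finite.upperClosure_paretoFront (hS : S.Finite) :
    upperClosure (paretoFront S) = upperClosure S := by
  refine le_antisymm (le_upperClosure.2 fun a ha => ?_) (upperClosure_anti (paretoFront_subset S))
  obtain ⟨m, hma, hm⟩ := hS.isPWO.exists_le_minimal ha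
  exact ⟨m, mem_paretoFront_iff_minimal.2 hm, hma⟩

end ParetoFront

section Relax

variable {V : Type*} (E : V → V → Prop) {k : ℕ} (w : V → V → Fin k → ℝ≥0)

def relax (T : V → Set (Fin k → ℝ≥0)) (v : V) : Set (Fin k → ℝ≥0) :=
  T v ∪ {x | ∃ u : V, E u v ∧ ∃ c ∈ T u, x = c + w u v}

variable {E w}

lemma relax_subset_upperClosure {T T' : V → Set (Fin k → ℝ≥0)}
    (h : ∀ u, T u ⊆ upperClosure (T' u)) (v : V) :
    relax E w T v ⊆ upperClosure (relax E w T' v) := by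
  rintro x (hx | ⟨u, huv, c, hc, rfl⟩)
  · obtain ⟨y, hy, hyx⟩ := h v hx
    exact ⟨y, Or.inl hy, hyx⟩
  · obtain ⟨c', hc', hc'c⟩ := h u hc
    exact ⟨c' + w u v, Or.inr ⟨u, huv, c', hc', rfl⟩, add_le_add_left hc'c _⟩

lemma upperClosure_relax_congr {T T' : V → Set (Fin k → ℝ≥0)}
    (h : ∀ u, upperClosure (T u) = upperClosure (T' u)) (v : V) :
    upperClosure (relax E w T v) = upperClosure (relax E w T' v) :=
  le_antisymm
    (le_upperClosure.2 <| relax_subset_upperClosure (fun u => h u ▸ subset_upperClosure) v)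
    (le_upperClosure.2 <| relax_subset_upperClosure (fun u => h u ▸ subset_upperClosure) v)

end Relax

section Walk

variable {V : Type*} {E : V → V → Prop} {k : ℕ} (w : V → V → Fin k → ℝ≥0)

lemma walkCost_singleton (a : V) : walkCost w [a] = 0 := rfl

lemma walkCost_cons_cons (a b : V) (l : List V) :
    walkCost w (a :: b :: l) = w a b + walkCost w (b :: l) := by
  simp [walkCost]

lemma walkCost_append_cons (l₁ : List V) (a : V) (l₂ : List V) :
    walkCost w (l₁ ++ a :: l₂) = walkCost w (l₁ ++ [a]) + walkCost w (a :: l₂) := by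
  induction l₁ with
  | nil => simp [walkCost_singleton]
  | cons b l₁ ih =>
    cases l₁ with
    | nil => simp [walkCost_cons_cons, walkCost_singleton]
    | cons c l₁ =>
      simp only [List.cons_append, walkCost_cons_cons] at ih ⊢
      rw [ih, add_assoc]

lemma walkCost_append_pair (l : List V) (u v : V) :
    walkCost w (l ++ [u, v]) = walkCost w (l ++ [u]) + w u v := by
  rw [walkCost_append_cons, walkCost_cons_cons, walkCost_singleton, add_zero]

lemma walkCost_append_singleton_le (l₁ : List V) (a : V) (l₂ : List V) :
    walkCost w (l₁ ++ [a]) ≤ walkCost w (l₁ ++ a :: l₂) := by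
  rw [walkCost_append_cons w l₁ a l₂]
  exact le_self_add

variable {s t : V}

lemma IsWalk.eq_append_singleton {l : List V} (h : IsWalk E s t l) : ∃ l₀, l = l₀ ++ [t] :=
  List.getLast?_eq_some_iff.1 h.2.2.1

lemma IsWalk.of_append_cons {l₁ l₂ : List V} {a : V} (h : IsWalk E s t (l₁ ++ a :: l₂)) :
    IsWalk E s a (l₁ ++ [a]) := by
  obtain ⟨-, hs, -, hE⟩ := h
  refine ⟨by simp, ?_, by simp, List.IsChain.prefix hE ⟨l₂, by simp⟩⟩
  cases l₁ <;> simpa using hs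

lemma isWalk_append_pair_iff {l : List V} {u v : V} :
    IsWalk E s t (l ++ [u, v]) ↔ IsWalk E s u (l ++ [u]) ∧ E u v ∧ v = t := by
  refine ⟨fun h => ⟨h.of_append_cons, ?_, ?_⟩, fun ⟨hu, huv, hvt⟩ => ⟨by simp, ?_, ?_, ?_⟩⟩
  · exact (List.isChain_append_cons_cons.1 h.2.2.2).2.1
  · simpa using h.2.2.1
  · cases l <;> simpa using hu.2.1
  · simpa using hvt
  · exact List.isChain_append_cons_cons.2 ⟨hu.2.2.2, huv, List.IsChain.singleton v⟩

lemma isWalk_singleton_iff {a : V} : IsWalk E s t [a] ↔ a = s ∧ a = t :=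
  ⟨fun h => ⟨Option.some.inj h.2.1, Option.some.inj h.2.2.1⟩, fun ⟨hs, ht⟩ =>
    ⟨List.cons_ne_nil a [], congrArg some hs, congrArg some ht, List.IsChain.singleton a⟩⟩

theorem IsWalk.exists_nodup_walkCost_le {l : List V} (h : IsWalk E s t l) :
    ∃ l', IsWalk E s t l' ∧ l'.Nodup ∧ walkCost w l' ≤ walkCost w l := by
  induction l using List.reverseRecOn generalizing t with
  | nil => exact absurd rfl h.1
  | append_singleton l a ih =>
    rcases l.eq_nil_or_concat' with rfl | ⟨l₁, u, rfl⟩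
    · exact ⟨[a], h, List.nodup_singleton a, le_rfl⟩
    rw [List.append_assoc, List.singleton_append, isWalk_append_pair_iff] at h
    obtain ⟨hu, hua, rfl⟩ := h
    obtain ⟨l', hl', hnd, hle⟩ := ih hu
    obtain ⟨l₂, rfl⟩ := hl'.eq_append_singleton
    have hle' : walkCost w (l₁ ++ [u]) ≤ walkCost w (l₁ ++ [u] ++ [a]) := by
      rw [List.append_assoc, List.singleton_append, walkCost_append_pair]
      exact le_self_add
    by_cases ha : a ∈ l₂ ++ [u]
    · obtain ⟨p, q, hpq⟩ := List.append_of_mem ha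
      rw [hpq] at hl' hnd hle
      refine ⟨p ++ [a], hl'.of_append_cons, ?_, ?_⟩
      · exact hnd.sublist (by simp)
      · exact (walkCost_append_singleton_le w p a q).trans (hle.trans hle')
    · refine ⟨l₂ ++ [u, a], isWalk_append_pair_iff.2 ⟨hl', hua, rfl⟩, ?_, ?_⟩
      · simpa using hnd.append (List.nodup_singleton a) (by simpa using ha)
      · rw [List.append_assoc, List.singleton_append, walkCost_append_pair, walkCost_append_pair]
        exact add_le_add_left hle _

end Walk

section WalkCosts

variable {V : Type*} (E : V → V → Prop) {k : ℕ} (w : V → V → Fin k → ℝ≥0) (s : V)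

/-- Costs of the walks from `s` to `v` with at most `ℓ` edges. -/
def walkCosts (ℓ : ℕ) (v : V) : Set (Fin k → ℝ≥0) :=
  walkCost w '' {l | IsWalk E s v l ∧ l.length ≤ ℓ + 1}

lemma walkCosts_finite [Finite V] (ℓ : ℕ) (v : V) : (walkCosts E w s ℓ v).Finite :=
  ((List.finite_length_le V (ℓ + 1)).subset fun _ hl => hl.2).image _

variable {v : V}

lemma walkCosts_mono {ℓ ℓ' : ℕ} (h : ℓ ≤ ℓ') : walkCosts E w s ℓ v ⊆ walkCosts E w s ℓ' v :=
  Set.image_mono fun _ hl => ⟨hl.1, hl.2.trans (by omega)⟩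

lemma walkCosts_zero : walkCosts E w s 0 v = {x | v = s ∧ x = 0} := by
  ext x
  constructor
  · rintro ⟨l, ⟨hl, hlen⟩, rfl⟩
    obtain ⟨a, rfl⟩ := List.length_eq_one_iff.1 (hlen.antisymm (List.length_pos_iff.2 hl.1))
    obtain ⟨rfl, rfl⟩ := isWalk_singleton_iff.1 hl
    exact ⟨rfl, walkCost_singleton w a⟩
  · rintro ⟨rfl, rfl⟩
    exact ⟨[v], ⟨isWalk_singleton_iff.2 ⟨rfl, rfl⟩, le_rfl⟩, walkCost_singleton w v⟩

lemma walkCosts_succ (ℓ : ℕ) :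
    walkCosts E w s (ℓ + 1) v = relax E w (walkCosts E w s ℓ) v := by
  ext x
  constructor
  · rintro ⟨l, ⟨hl, hlen⟩, rfl⟩
    by_cases hshort : l.length ≤ ℓ + 1
    · exact Or.inl ⟨l, ⟨hl, hshort⟩, rfl⟩
    obtain ⟨l₀, rfl⟩ := hl.eq_append_singleton
    rcases l₀.eq_nil_or_concat' with rfl | ⟨l₁, u, rfl⟩
    · simp at hshort
    rw [List.append_assoc, List.singleton_append] at hl ⊢
    obtain ⟨hu, huv, -⟩ := isWalk_append_pair_iff.1 hl
    refine Or.inr ⟨u, huv, _, ⟨l₁ ++ [u], ⟨hu, ?_⟩, rfl⟩, walkCost_append_pair w l₁ u v⟩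
    simp only [List.length_append, List.length_cons, List.length_nil] at hlen ⊢
    omega
  · rintro (⟨l, ⟨hl, hlen⟩, rfl⟩ | ⟨u, huv, _, ⟨l, ⟨hl, hlen⟩, rfl⟩, rfl⟩)
    · exact ⟨l, ⟨hl, hlen.trans (by omega)⟩, rfl⟩
    obtain ⟨l₀, rfl⟩ := hl.eq_append_singleton
    refine ⟨l₀ ++ [u, v], ⟨isWalk_append_pair_iff.2 ⟨hl, huv, rfl⟩, ?_⟩,
      walkCost_append_pair w l₀ u v⟩
    simp only [List.length_append, List.length_cons, List.length_nil] at hlen ⊢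
    omega

lemma walkCosts_subset_upperClosure [Fintype V] (ℓ : ℕ) :
    walkCosts E w s ℓ v ⊆ upperClosure (walkCosts E w s (Fintype.card V - 1) v) := by
  rintro _ ⟨l, ⟨hl, -⟩, rfl⟩
  obtain ⟨l', hl', hnd, hle⟩ := hl.exists_nodup_walkCost_le w
  have hcard := hnd.length_le_card
  exact ⟨walkCost w l', ⟨l', ⟨hl', by omega⟩, rfl⟩, hle⟩

lemma upperClosure_walkCosts_of_le [Fintype V] {ℓ : ℕ} (hℓ : Fintype.card V - 1 ≤ ℓ) :
    upperClosure (walkCosts E w s ℓ v) = upperClosure (walkCosts E w s (Fintype.card V - 1) v) :=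
  le_antisymm (upperClosure_anti (walkCosts_mono E w s hℓ))
    (le_upperClosure.2 (walkCosts_subset_upperClosure E w s ℓ))

end WalkCosts

lemma paretoTable_eq_paretoFront_walkCosts {V : Type*} [Finite V] (E : V → V → Prop) {k : ℕ}
    (w : V → V → Fin k → ℝ≥0) (s : V) (D : ℕ → V → Set (Fin k → ℝ≥0))
    (hD0s : D 0 s = {0}) (hD0 : ∀ v : V, v ≠ s → D 0 v = ∅)
    (hDstep : ∀ ℓ v, D (ℓ + 1) v = paretoFront (relax E w (D ℓ) v)) (ℓ : ℕ) (v : V) :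
    D ℓ v = paretoFront (walkCosts E w s ℓ v) := by
  induction ℓ generalizing v with
  | zero =>
    rcases eq_or_ne v s with rfl | hv
    · simp [hD0s, walkCosts_zero, Set.subsingleton_singleton.paretoFront_eq]
    · simp [hD0 v hv, walkCosts_zero, hv, Set.subsingleton_empty.paretoFront_eq]
  | succ ℓ ih =>
    rw [hDstep, walkCosts_succ]
    refine paretoFront_eq_of_upperClosure_eq (upperClosure_relax_congr (fun u => ?_) v)
    rw [ih u, (walkCosts_finite E w s ℓ u).upperClosure_paretoFront]

theorem paretoTable_stabilizes_general {V : Type*} [Fintype V]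
    (E : V → V → Prop) {k : ℕ} (w : V → V → Fin k → ℝ≥0)
    (s : V) (D : ℕ → V → Set (Fin k → ℝ≥0))
    (hD0s : D 0 s = {0})
    (hD0 : ∀ v : V, v ≠ s → D 0 v = ∅)
    (hDstep : ∀ (ℓ : ℕ) (v : V), D (ℓ + 1) v =
      paretoFront (D ℓ v ∪ {x | ∃ u : V, E u v ∧ ∃ c ∈ D ℓ u, x = c + w u v})) :
    ∀ (v : V) (ℓ : ℕ), Fintype.card V - 1 ≤ ℓ →
      D ℓ v = D (Fintype.card V - 1) v := by
  intro v ℓ hℓ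
  have hD := paretoTable_eq_paretoFront_walkCosts E w s D hD0s hD0 hDstep
  rw [hD, hD]
  exact paretoFront_eq_of_upperClosure_eq (upperClosure_walkCosts_of_le E w s hℓ)

/-- stabilization of the Pareto tables: for every vertex `v`
and every `ℓ ≥ card V - 1`, `D ℓ v = D (card V - 1) v`. -/
theorem paretoTable_stabilizes {V : Type*} [Fintype V]
    (E : V → V → Prop) [DecidableRel E] {k : ℕ} (w : V → V → Fin k → ℝ≥0)
    (s : V) (D : ℕ → V → Set (Fin k → ℝ≥0))
    (hD0s : D 0 s = {0})
    (hD0 : ∀ v : V, v ≠ s → D 0 v = ∅)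
    (hDstep : ∀ (ℓ : ℕ) (v : V), D (ℓ + 1) v =
      paretoFront (D ℓ v ∪ {x | ∃ u : V, E u v ∧ ∃ c ∈ D ℓ u, x = c + w u v})) :
    ∀ (v : V) (ℓ : ℕ), Fintype.card V - 1 ≤ ℓ →
      D ℓ v = D (Fintype.card V - 1) v :=
  paretoTable_stabilizes_general E w s D hD0s hD0 hDstep
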